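/- arXiv:0812.0106 — 4 statements merged into one kernel-verified Lean document; each statement's English description precedes it below -/
import Mathlib

section
/- For smooth solutions of the pressurised flow system with friction, ∂_t A + ∂_x Q = 0, ∂_t Q + ∂_x(Q²/A + c²A) = −gA(∂_x Z + K u|u|) with K ≥ 0, the entropy E(A,Q) = Q²/(2A) + gAZ + c²A ln A satisfies ∂_t E + ∂_x[u(E + c²A)] = −gAK|u|³ ≤ 0. -/
open Real

/-- For smooth solutions of the pressurised flow system with Manning–Strickler friction
`S_f = K u |u|`, `K ≥ 0`, the entropy satisfies
`∂ₜ E + ∂ₓ [u (E + c²A)] = -gAK|u|³ ≤ 0`. -/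
theorem entropy_dissipation_friction (c g K : ℝ) (hc : 0 < c) (hg : 0 < g) (hK : 0 ≤ K)
    (Z : ℝ → ℝ) (hZ : ContDiff ℝ (⊤ : ℕ∞) Z)
    (A Q : ℝ → ℝ → ℝ)
    (hA : ContDiff ℝ (⊤ : ℕ∞) fun p : ℝ × ℝ => A p.1 p.2)
    (hQ : ContDiff ℝ (⊤ : ℕ∞) fun p : ℝ × ℝ => Q p.1 p.2)
    (hApos : ∀ t x, 0 < A t x)
    (mass : ∀ t x, deriv (fun s => A s x) t + deriv (fun y => Q t y) x = 0)
    (mom : ∀ t x, deriv (fun s => Q s x) t +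
      deriv (fun y => (Q t y) ^ 2 / A t y + c ^ 2 * A t y) x
        = -(g * A t x * (deriv Z x + K * (Q t x / A t x) * |Q t x / A t x|))) :
    ∀ t x,
      (deriv (fun s => (Q s x) ^ 2 / (2 * A s x) + g * A s x * Z x
          + c ^ 2 * A s x * Real.log (A s x)) t
        + deriv (fun y => (Q t y / A t y) *
            (((Q t y) ^ 2 / (2 * A t y) + g * A t y * Z y
              + c ^ 2 * A t y * Real.log (A t y)) + c ^ 2 * A t y)) x
        = -(g * A t x * K * |Q t x / A t x| ^ 3)) ∧
      -(g * A t x * K * |Q t x / A t x| ^ 3) ≤ 0 := by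
  intro t x
  have ha0 : 0 < A t x := hApos t x
  have hane : A t x ≠ 0 := ne_of_gt ha0
  have h2a : (2 : ℝ) * A t x ≠ 0 := by positivity
  have hAd : Differentiable ℝ (fun p : ℝ × ℝ => A p.1 p.2) := hA.differentiable (by simp)
  have hQd : Differentiable ℝ (fun p : ℝ × ℝ => Q p.1 p.2) := hQ.differentiable (by simp)
  have haT : HasDerivAt (fun s => A s x) (deriv (fun s => A s x) t) t :=
    (DifferentiableAt.comp (g := fun p : ℝ × ℝ => A p.1 p.2) (f := fun s : ℝ => (s, x)) t (hAd (t, x))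
      (differentiableAt_id.prodMk (differentiableAt_const x))).hasDerivAt
  have hqT : HasDerivAt (fun s => Q s x) (deriv (fun s => Q s x) t) t :=
    (DifferentiableAt.comp (g := fun p : ℝ × ℝ => Q p.1 p.2) (f := fun s : ℝ => (s, x)) t (hQd (t, x))
      (differentiableAt_id.prodMk (differentiableAt_const x))).hasDerivAt
  have haX : HasDerivAt (fun y => A t y) (deriv (fun y => A t y) x) x :=
    (DifferentiableAt.comp x (hAd (t, x))
      ((differentiableAt_const t).prodMk differentiableAt_id)).hasDerivAt
  have hqX : HasDerivAt (fun y => Q t y) (deriv (fun y => Q t y) x) x :=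
    (DifferentiableAt.comp x (hQd (t, x))
      ((differentiableAt_const t).prodMk differentiableAt_id)).hasDerivAt
  have hzX : HasDerivAt Z (deriv Z x) x := (hZ.differentiable (by simp) x).hasDerivAt
  -- time derivative of the entropy
  have hE : HasDerivAt (fun s => (Q s x) ^ 2 / (2 * A s x) + g * A s x * Z x
      + c ^ 2 * A s x * Real.log (A s x)) _ t :=
    (((hqT.pow 2).div (haT.const_mul 2) h2a).add
      ((haT.const_mul g).mul_const (Z x))).add
      ((haT.const_mul (c ^ 2)).mul (haT.log hane))
  have eE := hE.deriv
  -- space derivative of the entropy flux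
  have hG : HasDerivAt (fun y => (Q t y / A t y) *
      (((Q t y) ^ 2 / (2 * A t y) + g * A t y * Z y
        + c ^ 2 * A t y * Real.log (A t y)) + c ^ 2 * A t y)) _ x :=
    (hqX.div haX hane).mul
      (((((hqX.pow 2).div (haX.const_mul 2) h2a).add
        ((haX.const_mul g).mul hzX)).add
        ((haX.const_mul (c ^ 2)).mul (haX.log hane))).add (haX.const_mul (c ^ 2)))
  have eG := hG.deriv
  -- space derivative of the momentum flux
  have hM : HasDerivAt (fun y => (Q t y) ^ 2 / A t y + c ^ 2 * A t y) _ x :=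
    ((hqX.pow 2).div haX hane).add (haX.const_mul (c ^ 2))
  have eM := hM.deriv
  have hmom := mom t x
  rw [eM] at hmom
  have hqt := eq_sub_of_add_eq hmom
  have hat : deriv (fun s => A s x) t = -deriv (fun y => Q t y) x := by
    have := mass t x; linarith
  constructor
  · rw [eE, eG, hat, hqt,
      show |Q t x / A t x| ^ 3 = (Q t x / A t x) ^ 2 * |Q t x / A t x| by
        rw [pow_succ, sq_abs]]
    simp only [Pi.div_apply, Pi.pow_apply]
    field_simp
    ring
  · have h1 : 0 ≤ g * A t x * K * |Q t x / A t x| ^ 3 := by positivity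
    linarith
end

section
/- Given A > 0 and Q ∈ ℝ, the minimizer of the functional E(f) = ∫_ℝ [ξ²/2 · f + c² f ln f + gZ f + c² ln(c√(2π)) f ] dξ over nonnegative functions f with ∫f dξ = A and ∫ξ f dξ = Q is the Maxwellian M(ξ) = (A/c) χ((ξ−u)/c) with χ(ω) = (1/√(2π)) exp(−ω²/2) and u = Q/A. -/
open MeasureTheory Real ProbabilityTheory NNReal

/-!
With `V ξ = ξ²/2 + gZ + c² ln(c√(2π))`, the Maxwellian satisfies `c² ln M + V = ψ` for an affine
function `ψ(ξ) = a + uξ`. Since `ln x ≤ x - 1`, pointwise `f ln f ≥ f ln M + f - M`, hence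
`V f + c² f ln f ≥ ψ f + c² (f - M)`. Integrating, the right-hand side only sees the mass and the
momentum of `f`, which are those of `M`, so it equals `∫ ψ M = E(M)`.
-/

lemma sub_le_mul_log_sub_mul_log {x m : ℝ} (hx : 0 ≤ x) (hm : 0 < m) :
    x - m ≤ x * log x - x * log m := by
  rcases hx.eq_or_lt with rfl | hx
  · simpa using hm.le
  · have h := one_sub_inv_le_log_of_pos (div_pos hx hm)
    rw [inv_div, log_div hx.ne' hm.ne'] at h
    have := mul_le_mul_of_nonneg_left h hx.le
    rwa [mul_sub, mul_one, mul_div_cancel₀ _ hx.ne', mul_sub] at this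

section Gibbs

variable {α : Type*} [MeasurableSpace α] {μ : Measure α}

theorem integral_energy_le_of_mul_log_add_eq {T : ℝ} {V ψ f M : α → ℝ} (hT : 0 ≤ T)
    (hf : ∀ x, 0 ≤ f x) (hM : ∀ x, 0 < M x) (hMψ : ∀ x, T * log (M x) + V x = ψ x)
    (hf_int : Integrable f μ) (hM_int : Integrable M μ)
    (hψf_int : Integrable (fun x => ψ x * f x) μ)
    (hEf_int : Integrable (fun x => V x * f x + T * f x * log (f x)) μ)
    (h_mass : ∫ x, f x ∂μ = ∫ x, M x ∂μ) (h_ψ : ∫ x, ψ x * f x ∂μ = ∫ x, ψ x * M x ∂μ) :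
    ∫ x, V x * M x + T * M x * log (M x) ∂μ ≤ ∫ x, V x * f x + T * f x * log (f x) ∂μ := by
  have h_pointwise : ∀ x, ψ x * f x + T * f x - T * M x ≤ V x * f x + T * f x * log (f x) := by
    intro x
    have := mul_le_mul_of_nonneg_left (sub_le_mul_log_sub_mul_log (hf x) (hM x)) hT
    rw [← hMψ x]
    linear_combination this
  have hψf_add_int : Integrable (fun x => ψ x * f x + T * f x) μ :=
    hψf_int.fun_add (hf_int.const_mul T)
  calc ∫ x, V x * M x + T * M x * log (M x) ∂μ = ∫ x, ψ x * M x ∂μ :=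
        integral_congr_ae (ae_of_all _ fun x => by simp only [← hMψ x]; ring)
    _ = ∫ x, ψ x * f x + T * f x - T * M x ∂μ := by
        rw [integral_sub hψf_add_int (hM_int.const_mul T),
          integral_add hψf_int (hf_int.const_mul T), integral_const_mul, integral_const_mul,
          h_mass, h_ψ]
        ring
    _ ≤ ∫ x, V x * f x + T * f x * log (f x) ∂μ :=
        integral_mono (hψf_add_int.sub' (hM_int.const_mul T)) hEf_int h_pointwise

end Gibbs

section Affine

variable {μ : Measure ℝ} {f : ℝ → ℝ}

lemma integrable_affine_mul (hf : Integrable f μ) (hxf : Integrable (fun x => x * f x) μ)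
    (a b : ℝ) : Integrable (fun x => (a + b * x) * f x) μ :=
  ((hf.const_mul a).add (hxf.const_mul b)).congr
    (ae_of_all _ fun x => by simp only [Pi.add_apply]; ring)

lemma integral_affine_mul (hf : Integrable f μ) (hxf : Integrable (fun x => x * f x) μ)
    (a b : ℝ) : ∫ x, (a + b * x) * f x ∂μ = a * ∫ x, f x ∂μ + b * ∫ x, x * f x ∂μ := by
  rw [← integral_const_mul, ← integral_const_mul,
    ← integral_add (hf.const_mul a) (hxf.const_mul b)]
  exact integral_congr_ae (ae_of_all _ fun x => by ring)

end Affine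

section Gaussian

lemma integrable_mul_gaussianPDFReal (m : ℝ) (v : ℝ≥0) :
    Integrable (fun x => x * gaussianPDFReal m v x) := by
  rcases eq_or_ne v 0 with rfl | hv
  · simp
  have h := (memLp_id_gaussianReal (μ := m) (v := v) 1).integrable le_rfl
  rw [gaussianReal_of_var_ne_zero _ hv, integrable_withDensity_iff_integrable_smul'
    (measurable_gaussianPDF m v) (ae_of_all _ fun _ => gaussianPDF_lt_top)] at h
  simpa [mul_comm] using h

lemma integral_mul_gaussianPDFReal (m : ℝ) {v : ℝ≥0} (hv : v ≠ 0) :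
    ∫ x, x * gaussianPDFReal m v x = m := by
  simpa [integral_gaussianReal_eq_integral_smul hv, mul_comm] using
    integral_id_gaussianReal (μ := m) (v := v)

lemma log_gaussianPDFReal (m : ℝ) {v : ℝ≥0} (hv : v ≠ 0) (x : ℝ) :
    log (gaussianPDFReal m v x) = -log √(2 * π * v) - (x - m) ^ 2 / (2 * v) := by
  have : 0 < √(2 * π * v) := by positivity
  rw [gaussianPDFReal_def, log_mul (inv_ne_zero this.ne') (exp_ne_zero _), log_inv, log_exp]
  ring

end Gaussian

lemma sqrt_two_mul_pi_mul_sq {c : ℝ} (hc : 0 ≤ c) : √(2 * π * c ^ 2) = c * √(2 * π) := by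
  rw [mul_comm, sqrt_mul (sq_nonneg c), sqrt_sq hc]

lemma maxwellian_eq_mul_gaussianPDFReal {c : ℝ} (hc : 0 < c) (A u ξ : ℝ) :
    A / c * (1 / √(2 * π) * exp (-((ξ - u) / c) ^ 2 / 2))
      = A * gaussianPDFReal u (c ^ 2).toNNReal ξ := by
  rw [gaussianPDFReal_def, Real.coe_toNNReal _ (sq_nonneg c), sqrt_two_mul_pi_mul_sq hc.le,
    div_pow]
  field_simp

lemma sq_mul_log_mul_gaussianPDFReal {c A : ℝ} (hc : 0 < c) (hA : 0 < A) (u ξ : ℝ) :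
    c ^ 2 * log (A * gaussianPDFReal u (c ^ 2).toNNReal ξ)
      = c ^ 2 * log A - c ^ 2 * log (c * √(2 * π)) - (ξ - u) ^ 2 / 2 := by
  have hv : (c ^ 2).toNNReal ≠ 0 := by simpa using hc.ne'
  rw [log_mul hA.ne' (gaussianPDFReal_pos _ _ _ hv).ne', log_gaussianPDFReal _ hv,
    Real.coe_toNNReal _ (sq_nonneg c), sqrt_two_mul_pi_mul_sq hc.le]
  field_simp
  ring

theorem gibbs_minimizes_energy_general (c g Z : ℝ) (hc : 0 < c)
    (A Q : ℝ) (hA : 0 < A) :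
    let u := Q / A
    let M : ℝ → ℝ := fun ξ => A / c * (1 / Real.sqrt (2 * π) * Real.exp (-((ξ - u) / c) ^ 2 / 2))
    (∀ ξ, 0 ≤ M ξ) ∧ (∫ ξ, M ξ) = A ∧ (∫ ξ, ξ * M ξ) = Q ∧
    ∀ f : ℝ → ℝ, (∀ ξ, 0 ≤ f ξ) → Integrable f → (∫ ξ, f ξ) = A →
      Integrable (fun ξ => ξ * f ξ) → (∫ ξ, ξ * f ξ) = Q →
      Integrable (fun ξ => ξ ^ 2 / 2 * f ξ + c ^ 2 * f ξ * Real.log (f ξ)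
        + g * Z * f ξ + c ^ 2 * Real.log (c * Real.sqrt (2 * π)) * f ξ) →
      (∫ ξ, ξ ^ 2 / 2 * M ξ + c ^ 2 * M ξ * Real.log (M ξ)
          + g * Z * M ξ + c ^ 2 * Real.log (c * Real.sqrt (2 * π)) * M ξ)
        ≤ ∫ ξ, ξ ^ 2 / 2 * f ξ + c ^ 2 * f ξ * Real.log (f ξ)
          + g * Z * f ξ + c ^ 2 * Real.log (c * Real.sqrt (2 * π)) * f ξ := by
  intro u M
  set v := (c ^ 2).toNNReal
  have hv : v ≠ 0 := by simpa [v] using hc.ne'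
  have hM : M = fun ξ => A * gaussianPDFReal u v ξ :=
    funext (maxwellian_eq_mul_gaussianPDFReal hc A u)
  have hM_pos : ∀ ξ, 0 < M ξ := fun ξ => hM ▸ mul_pos hA (gaussianPDFReal_pos _ _ _ hv)
  have hM_int : Integrable M := hM ▸ (integrable_gaussianPDFReal u v).const_mul A
  have hxM_int : Integrable (fun ξ => ξ * M ξ) := by
    simpa only [hM, mul_left_comm _ A] using (integrable_mul_gaussianPDFReal u v).const_mul A
  have hM_mass : ∫ ξ, M ξ = A := by
    rw [hM, integral_const_mul, integral_gaussianPDFReal_eq_one _ hv, mul_one]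
  have hM_mom : ∫ ξ, ξ * M ξ = Q := by
    simp only [hM, mul_left_comm _ A, integral_const_mul, integral_mul_gaussianPDFReal _ hv, u]
    field_simp
  refine ⟨fun ξ => (hM_pos ξ).le, hM_mass, hM_mom, fun f hf hf_int hf_mass hxf_int hf_mom hEf => ?_⟩
  have hMψ : ∀ ξ, c ^ 2 * log (M ξ) + (ξ ^ 2 / 2 + g * Z + c ^ 2 * log (c * √(2 * π)))
      = (c ^ 2 * log A + g * Z - u ^ 2 / 2) + u * ξ := fun ξ => by
    simp only [hM]
    linear_combination sq_mul_log_mul_gaussianPDFReal hc hA u ξ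
  convert integral_energy_le_of_mul_log_add_eq (μ := volume) (sq_nonneg c) hf hM_pos hMψ
    hf_int hM_int (integrable_affine_mul hf_int hxf_int _ u)
    (hEf.congr (ae_of_all _ fun ξ => by ring)) (hf_mass.trans hM_mass.symm)
    (by rw [integral_affine_mul hf_int hxf_int, integral_affine_mul hM_int hxM_int, hf_mass,
      hM_mass, hf_mom, hM_mom]) using 3 <;> ring

/-- The Gaussian Maxwellian `M(ξ) = (A/c) χ((ξ-u)/c)`, `χ(ω) = (1/√(2π)) e^{-ω²/2}`,
`u = Q/A`, minimizes the kinetic energy functional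
`E(f) = ∫ [ξ²/2 f + c² f ln f + gZ f + c² ln(c√(2π)) f] dξ`
among nonnegative functions with `∫ f = A` and `∫ ξ f = Q`. -/
theorem gibbs_minimizes_energy (c g Z : ℝ) (hc : 0 < c) (hg : 0 < g)
    (A Q : ℝ) (hA : 0 < A) :
    let u := Q / A
    let M : ℝ → ℝ := fun ξ => A / c * (1 / Real.sqrt (2 * π) * Real.exp (-((ξ - u) / c) ^ 2 / 2))
    (∀ ξ, 0 ≤ M ξ) ∧ (∫ ξ, M ξ) = A ∧ (∫ ξ, ξ * M ξ) = Q ∧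
    ∀ f : ℝ → ℝ, (∀ ξ, 0 ≤ f ξ) → Integrable f → (∫ ξ, f ξ) = A →
      Integrable (fun ξ => ξ * f ξ) → (∫ ξ, ξ * f ξ) = Q →
      Integrable (fun ξ => ξ ^ 2 / 2 * f ξ + c ^ 2 * f ξ * Real.log (f ξ)
        + g * Z * f ξ + c ^ 2 * Real.log (c * Real.sqrt (2 * π)) * f ξ) →
      (∫ ξ, ξ ^ 2 / 2 * M ξ + c ^ 2 * M ξ * Real.log (M ξ)
          + g * Z * M ξ + c ^ 2 * Real.log (c * Real.sqrt (2 * π)) * M ξ)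
        ≤ ∫ ξ, ξ ^ 2 / 2 * f ξ + c ^ 2 * f ξ * Real.log (f ξ)
          + g * Z * f ξ + c ^ 2 * Real.log (c * Real.sqrt (2 * π)) * f ξ :=
  gibbs_minimizes_energy_general c g Z hc A Q hA
end

section
/- With χ(ω) = (1/√(2π)) e^{−ω²/2} and M(ξ) = (A/c) χ((ξ−u)/c), the microscopic energy E(M) = ∫_ℝ [ξ²/2 · M + c² M ln M + gZ M + c² ln(c√(2π)) M] dξ equals the macroscopic entropy E(A,Q,Z) = Q²/(2A) + gAZ + c²A ln A, where Q = Au. -/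
/-!
With `ω = (ξ - u) / c`, `ln M = ln A - ln (c √(2π)) - ω² / 2`, so the `-c² ω² / 2 · M` part of
`c² M ln M` cancels the quadratic part of `ξ² / 2 · M = (u + c ω)² / 2 · M`. The integrand becomes
`(A / c) (u c ω + u² / 2 + c² ln A + g Z) χ(ω)`, and only the moments `∫ χ = 1` and `∫ ω χ = 0`
of the standard Gaussian are needed.
-/

open MeasureTheory Real

/-- The paper's `χ`. -/
noncomputable def stdGaussianPDF (ω : ℝ) : ℝ := 1 / √(2 * π) * exp (-ω ^ 2 / 2)

lemma stdGaussianPDF_eq (ω : ℝ) : stdGaussianPDF ω = 1 / √(2 * π) * exp (-(1 / 2) * ω ^ 2) := by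
  rw [stdGaussianPDF]; ring_nf

lemma stdGaussianPDF_neg (ω : ℝ) : stdGaussianPDF (-ω) = stdGaussianPDF ω := by
  simp [stdGaussianPDF]

lemma integrable_stdGaussianPDF : Integrable stdGaussianPDF := by
  simp_rw [funext stdGaussianPDF_eq]
  exact (integrable_exp_neg_mul_sq (by norm_num)).const_mul _

lemma integrable_mul_stdGaussianPDF : Integrable fun ω => ω * stdGaussianPDF ω := by
  simp_rw [stdGaussianPDF_eq, mul_left_comm _ (1 / √(2 * π))]
  exact (integrable_mul_exp_neg_mul_sq (by norm_num)).const_mul _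

lemma integral_stdGaussianPDF : ∫ ω, stdGaussianPDF ω = 1 := by
  simp_rw [stdGaussianPDF_eq, integral_const_mul, integral_gaussian]
  rw [div_div_eq_mul_div, div_one, mul_comm π, one_div_mul_cancel (by positivity)]

lemma integral_mul_stdGaussianPDF : ∫ ω, ω * stdGaussianPDF ω = 0 := by
  have h := integral_neg_eq_self (fun ω => ω * stdGaussianPDF ω) volume
  simp only [stdGaussianPDF_neg, neg_mul, integral_neg] at h
  linarith

lemma integral_affine_mul_stdGaussianPDF (a b : ℝ) :
    ∫ ω, (a * ω + b) * stdGaussianPDF ω = b := by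
  simp_rw [add_mul, mul_assoc a]
  rw [integral_add (integrable_mul_stdGaussianPDF.const_mul _)
    (integrable_stdGaussianPDF.const_mul _), integral_const_mul, integral_const_mul,
    integral_mul_stdGaussianPDF, integral_stdGaussianPDF]
  ring

lemma log_mul_stdGaussianPDF {a : ℝ} (ha : 0 < a) (ω : ℝ) :
    log (a * stdGaussianPDF ω) = log a - log √(2 * π) - ω ^ 2 / 2 := by
  rw [stdGaussianPDF, ← mul_assoc, log_mul (by positivity) (exp_ne_zero _), log_exp,
    mul_one_div, log_div ha.ne' (by positivity)]
  ring

lemma integral_comp_sub_div {F : Type*} [NormedAddCommGroup F] [NormedSpace ℝ F]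
    (f : ℝ → F) (u c : ℝ) : ∫ ξ, f ((ξ - u) / c) = |c| • ∫ ω, f ω := by
  rw [integral_sub_right_eq_self (fun ξ => f (ξ / c)), Measure.integral_comp_div]

lemma gibbs_energy_integrand_eq {A c : ℝ} (hA : 0 < A) (hc : 0 < c) (u g Z ξ : ℝ) :
    let M := A / c * stdGaussianPDF ((ξ - u) / c)
    ξ ^ 2 / 2 * M + c ^ 2 * M * log M + g * Z * M + c ^ 2 * log (c * √(2 * π)) * M
      = A / c * ((u * c * ((ξ - u) / c) + (u ^ 2 / 2 + c ^ 2 * log A + g * Z))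
          * stdGaussianPDF ((ξ - u) / c)) := by
  intro M
  set ω := (ξ - u) / c with hω
  have hξ : ξ = u + c * ω := by rw [hω]; field_simp; ring
  have hlogM : log M = log A - log c - log √(2 * π) - ω ^ 2 / 2 := by
    rw [log_mul_stdGaussianPDF (by positivity), log_div hA.ne' hc.ne']
  rw [hlogM, log_mul hc.ne' (by positivity), hξ]
  ring

theorem microscopic_energy_eq_entropy_general (c g Z : ℝ) (hc : 0 < c)
    (A u Q : ℝ) (hA : 0 < A) (hQ : Q = A * u) :
    let M : ℝ → ℝ := fun ξ => A / c * (1 / Real.sqrt (2 * π) * Real.exp (-((ξ - u) / c) ^ 2 / 2))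
    (∫ ξ, ξ ^ 2 / 2 * M ξ + c ^ 2 * M ξ * Real.log (M ξ)
        + g * Z * M ξ + c ^ 2 * Real.log (c * Real.sqrt (2 * π)) * M ξ)
      = Q ^ 2 / (2 * A) + g * A * Z + c ^ 2 * A * Real.log A := by
  intro M
  set K := u ^ 2 / 2 + c ^ 2 * log A + g * Z
  calc _ = ∫ ξ, A / c * ((u * c * ((ξ - u) / c) + K) * stdGaussianPDF ((ξ - u) / c)) :=
        integral_congr_ae (.of_forall (gibbs_energy_integrand_eq hA hc u g Z))
    _ = A * K := by
        rw [integral_const_mul,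
          integral_comp_sub_div (fun ω => (u * c * ω + K) * stdGaussianPDF ω),
          integral_affine_mul_stdGaussianPDF, abs_of_pos hc, smul_eq_mul]
        field_simp
    _ = _ := by rw [hQ]; field_simp; ring

/-- The microscopic energy of the Gaussian Gibbs equilibrium equals the macroscopic
entropy: `E(M) = Q²/(2A) + gAZ + c²A ln A`, where `Q = Au`. -/
theorem microscopic_energy_eq_entropy (c g Z : ℝ) (hc : 0 < c) (hg : 0 < g)
    (A u Q : ℝ) (hA : 0 < A) (hQ : Q = A * u) :
    let M : ℝ → ℝ := fun ξ => A / c * (1 / Real.sqrt (2 * π) * Real.exp (-((ξ - u) / c) ^ 2 / 2))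
    (∫ ξ, ξ ^ 2 / 2 * M ξ + c ^ 2 * M ξ * Real.log (M ξ)
        + g * Z * M ξ + c ^ 2 * Real.log (c * Real.sqrt (2 * π)) * M ξ)
      = Q ^ 2 / (2 * A) + g * A * Z + c ^ 2 * A * Real.log A :=
  microscopic_energy_eq_entropy_general c g Z hc A u Q hA hQ
end

section
/- Let M_i, M_{i+1}: ℝ → ℝ₊ be nonnegative functions and ΔZ ∈ ℝ. Define the downwind interface flux M⁻(ξ) = M_i(ξ)𝟙_{ξ≥0} + M_i(−ξ)𝟙_{ξ²≤2gΔZ}𝟙_{ξ≤0} + M_{i+1}(−√(ξ²−2gΔZ))𝟙_{ξ²≥2gΔZ}𝟙_{ξ≤0} and the upwind flux M⁺(ξ) = M_{i+1}(ξ)𝟙_{ξ≤0} + M_{i+1}(−ξ)𝟙_{ξ²≤−2gΔZ}𝟙_{ξ≥0} + M_i(√(ξ²+2gΔZ))𝟙_{ξ²≥−2gΔZ}𝟙_{ξ≥0}. Then ∫_ℝ ξ M⁻(ξ) dξ = ∫_ℝ ξ M⁺(ξ) dξ, i.e. the mass flux is conservative across the interface. -/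
/-!
Write `c = 2 g ΔZ`. Each of `M⁻`, `M⁺` is the sum of a part carried by `M_i` and a part carried
by `M_{i+1}`, and the two parts are conserved separately; the `M_{i+1}` part is the mirror image,
under `ξ ↦ -ξ` and `c ↦ -c`, of the `M_i` part. For the `M_i` part, the reflected particles
cancel the slow incoming ones, so the flux on the left is `∫_{v > √c} v M_i(v) dv`, and the
substitution `v = √(ξ² + c)` (so that `v dv = ξ dξ`) turns the transmitted flux on the right into
the same integral. Both sign cases of `c` are handled at once because `√` is `0` on negative
reals: the substitution maps `(√(-c), ∞)` onto `(√c, ∞)` for every `c`.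
-/

open MeasureTheory Real Set

theorem MeasureTheory.Integrable.mul_comp_neg {f : ℝ → ℝ} (hf : Integrable fun ξ => ξ * f ξ) :
    Integrable fun ξ => ξ * f (-ξ) :=
  hf.comp_neg.neg.congr (.of_forall fun ξ => by simp)

theorem integral_mul_comp_neg (f : ℝ → ℝ) : ∫ ξ, ξ * f (-ξ) = -∫ ξ, ξ * f ξ := by
  rw [← integral_neg_eq_self (fun ξ => ξ * f ξ), ← integral_neg]
  simp

section SqrtSqAdd

variable (c : ℝ)

theorem pos_and_sq_add_pos_of_sqrt_neg_lt {ξ : ℝ} (hξ : √(-c) < ξ) : 0 < ξ ∧ 0 < ξ ^ 2 + c := by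
  have hξ0 : 0 < ξ := (sqrt_nonneg _).trans_lt hξ
  exact ⟨hξ0, by linarith [(sqrt_lt' hξ0).1 hξ]⟩

theorem strictMonoOn_sqrt_sq_add : StrictMonoOn (fun ξ => √(ξ ^ 2 + c)) (Ioi √(-c)) := by
  intro x hx y hy hxy
  obtain ⟨hx0, hxc⟩ := pos_and_sq_add_pos_of_sqrt_neg_lt c hx
  exact sqrt_lt_sqrt hxc.le (by nlinarith)

theorem image_sqrt_sq_add_Ioi : (fun ξ => √(ξ ^ 2 + c)) '' Ioi √(-c) = Ioi √c := by
  ext v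
  constructor
  · rintro ⟨ξ, hξ, rfl⟩
    obtain ⟨hξ0, hξc⟩ := pos_and_sq_add_pos_of_sqrt_neg_lt c hξ
    exact (sqrt_lt_sqrt_iff_of_pos hξc).2 (by nlinarith)
  · intro hv
    have hv0 : 0 < v := (sqrt_nonneg _).trans_lt hv
    have hvc : 0 < v ^ 2 - c := by linarith [(sqrt_lt' hv0).1 hv]
    refine ⟨√(v ^ 2 - c), (sqrt_lt_sqrt_iff_of_pos hvc).2 (by nlinarith), ?_⟩
    simp [sq_sqrt hvc.le, sqrt_sq hv0.le]

theorem hasDerivAt_sqrt_sq_add {ξ : ℝ} (hξ : 0 < ξ ^ 2 + c) :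
    HasDerivAt (fun ξ => √(ξ ^ 2 + c)) (ξ / √(ξ ^ 2 + c)) ξ := by
  convert ((hasDerivAt_pow 2 ξ).add_const c).sqrt hξ.ne' using 1
  field_simp
  ring

theorem abs_deriv_sqrt_sq_add_smul (f : ℝ → ℝ) {ξ : ℝ} (hξ : √(-c) < ξ) :
    |ξ / √(ξ ^ 2 + c)| • (√(ξ ^ 2 + c) * f √(ξ ^ 2 + c)) = ξ * f √(ξ ^ 2 + c) := by
  obtain ⟨hξ0, hξc⟩ := pos_and_sq_add_pos_of_sqrt_neg_lt c hξ
  have hs : 0 < √(ξ ^ 2 + c) := sqrt_pos.2 hξc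
  rw [abs_of_pos (div_pos hξ0 hs), smul_eq_mul]
  field_simp

theorem integrableOn_Ioi_mul_comp_sqrt_sq_add_iff (f : ℝ → ℝ) :
    IntegrableOn (fun ξ => ξ * f √(ξ ^ 2 + c)) (Ioi √(-c)) ↔
      IntegrableOn (fun v => v * f v) (Ioi √c) := by
  rw [← image_sqrt_sq_add_Ioi c, integrableOn_image_iff_integrableOn_abs_deriv_smul
    measurableSet_Ioi (fun ξ hξ => (hasDerivAt_sqrt_sq_add c
      (pos_and_sq_add_pos_of_sqrt_neg_lt c hξ).2).hasDerivWithinAt)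
    (strictMonoOn_sqrt_sq_add c).injOn]
  exact integrableOn_congr_fun (fun ξ hξ => (abs_deriv_sqrt_sq_add_smul c f hξ).symm)
    measurableSet_Ioi

theorem setIntegral_Ioi_mul_comp_sqrt_sq_add (f : ℝ → ℝ) :
    ∫ ξ in Ioi √(-c), ξ * f √(ξ ^ 2 + c) = ∫ v in Ioi √c, v * f v := by
  rw [← image_sqrt_sq_add_Ioi c, integral_image_eq_integral_abs_deriv_smul
    measurableSet_Ioi (fun ξ hξ => (hasDerivAt_sqrt_sq_add c
      (pos_and_sq_add_pos_of_sqrt_neg_lt c hξ).2).hasDerivWithinAt)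
    (strictMonoOn_sqrt_sq_add c).injOn]
  exact setIntegral_congr_fun measurableSet_Ioi
    (fun ξ hξ => (abs_deriv_sqrt_sq_add_smul c f hξ).symm)

end SqrtSqAdd

noncomputable def reflectionDensity (c : ℝ) (M : ℝ → ℝ) (ξ : ℝ) : ℝ :=
  M ξ * (if 0 ≤ ξ then (1 : ℝ) else 0)
    + M (-ξ) * (if ξ ^ 2 ≤ c then (1 : ℝ) else 0) * (if ξ ≤ 0 then (1 : ℝ) else 0)

noncomputable def transmissionDensity (c : ℝ) (M : ℝ → ℝ) (ξ : ℝ) : ℝ :=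
  M √(ξ ^ 2 + c) * (if -c ≤ ξ ^ 2 then (1 : ℝ) else 0) * (if 0 ≤ ξ then (1 : ℝ) else 0)

section Densities

variable (c : ℝ) (M : ℝ → ℝ)

theorem mul_reflectionDensity (ξ : ℝ) :
    ξ * reflectionDensity c M ξ =
      (Ioi 0).indicator (fun v => v * M v) ξ - (Ioc 0 √c).indicator (fun v => v * M v) (-ξ) := by
  rcases lt_trichotomy ξ 0 with hξ | rfl | hξ
  · have hmem : -ξ ∈ Ioc 0 √c ↔ ξ ^ 2 ≤ c := by
      rw [mem_Ioc, le_sqrt' (by linarith), neg_sq]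
      exact and_iff_right (by linarith)
    by_cases hc : ξ ^ 2 ≤ c
    · simp [reflectionDensity, indicator_of_mem (hmem.2 hc), hξ.le, hξ.not_ge, hc]
    · simp [reflectionDensity, indicator_of_notMem (mt hmem.1 hc), hξ.le, hξ.not_ge, hc]
  · simp
  · simp [reflectionDensity, hξ, hξ.le, hξ.not_ge]

theorem mul_transmissionDensity (ξ : ℝ) :
    ξ * transmissionDensity c M ξ = (Ici √(-c)).indicator (fun ξ => ξ * M √(ξ ^ 2 + c)) ξ := by
  have hmem : ξ ∈ Ici √(-c) ↔ 0 ≤ ξ ∧ -c ≤ ξ ^ 2 := sqrt_le_iff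
  by_cases h : 0 ≤ ξ ∧ -c ≤ ξ ^ 2
  · simp [transmissionDensity, indicator_of_mem (hmem.2 h), h.1, h.2]
  · rw [indicator_of_notMem (mt hmem.1 h), transmissionDensity]
    split_ifs <;> simp_all

variable {M}

theorem integrable_mul_reflectionDensity (hM : Integrable fun v => v * M v) :
    Integrable fun ξ => ξ * reflectionDensity c M ξ := by
  simp only [mul_reflectionDensity]
  exact (hM.indicator measurableSet_Ioi).sub (hM.indicator measurableSet_Ioc).comp_neg

theorem integral_mul_reflectionDensity (hM : Integrable fun v => v * M v) :
    ∫ ξ, ξ * reflectionDensity c M ξ = ∫ v in Ioi √c, v * M v := by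
  simp only [mul_reflectionDensity]
  rw [integral_sub (hM.indicator measurableSet_Ioi) (hM.indicator measurableSet_Ioc).comp_neg,
    integral_neg_eq_self, integral_indicator measurableSet_Ioi,
    integral_indicator measurableSet_Ioc, ← Ioc_union_Ioi_eq_Ioi (sqrt_nonneg c),
    setIntegral_union Ioc_disjoint_Ioi_same measurableSet_Ioi hM.integrableOn hM.integrableOn]
  ring

theorem integrable_mul_transmissionDensity (hM : Integrable fun v => v * M v) :
    Integrable fun ξ => ξ * transmissionDensity c M ξ := by
  simp only [mul_transmissionDensity]
  refine IntegrableOn.integrable_indicator ?_ measurableSet_Ici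
  rw [integrableOn_Ici_iff_integrableOn_Ioi, integrableOn_Ioi_mul_comp_sqrt_sq_add_iff]
  exact hM.integrableOn

theorem integral_mul_transmissionDensity :
    ∫ ξ, ξ * transmissionDensity c M ξ = ∫ v in Ioi √c, v * M v := by
  simp only [mul_transmissionDensity]
  rw [integral_indicator measurableSet_Ici, integral_Ici_eq_integral_Ioi,
    setIntegral_Ioi_mul_comp_sqrt_sq_add]

end Densities

/-- The paper's `M⁻`, and `M⁺` below, with `c = 2 g ΔZ`. -/
noncomputable def downwindDensity (c : ℝ) (M N : ℝ → ℝ) (ξ : ℝ) : ℝ :=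
  M ξ * (if 0 ≤ ξ then (1 : ℝ) else 0)
    + M (-ξ) * (if ξ ^ 2 ≤ c then (1 : ℝ) else 0) * (if ξ ≤ 0 then (1 : ℝ) else 0)
    + N (-√(ξ ^ 2 - c)) * (if c ≤ ξ ^ 2 then (1 : ℝ) else 0) * (if ξ ≤ 0 then (1 : ℝ) else 0)

noncomputable def upwindDensity (c : ℝ) (M N : ℝ → ℝ) (ξ : ℝ) : ℝ :=
  N ξ * (if ξ ≤ 0 then (1 : ℝ) else 0)
    + N (-ξ) * (if ξ ^ 2 ≤ -c then (1 : ℝ) else 0) * (if 0 ≤ ξ then (1 : ℝ) else 0)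
    + M √(ξ ^ 2 + c) * (if -c ≤ ξ ^ 2 then (1 : ℝ) else 0) * (if 0 ≤ ξ then (1 : ℝ) else 0)

theorem downwindDensity_eq (c : ℝ) (M N : ℝ → ℝ) (ξ : ℝ) :
    downwindDensity c M N ξ =
      reflectionDensity c M ξ + transmissionDensity (-c) (fun v => N (-v)) (-ξ) := by
  simp only [downwindDensity, reflectionDensity, transmissionDensity, neg_sq, neg_neg,
    neg_nonneg, ← sub_eq_add_neg]

theorem upwindDensity_eq (c : ℝ) (M N : ℝ → ℝ) (ξ : ℝ) :
    upwindDensity c M N ξ =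
      transmissionDensity c M ξ + reflectionDensity (-c) (fun v => N (-v)) (-ξ) := by
  simp only [upwindDensity, reflectionDensity, transmissionDensity, neg_sq, neg_neg,
    neg_nonneg, neg_nonpos]
  ring

theorem interface_mass_flux_conservative_general (g ΔZ : ℝ)
    (Mi Mi1 : ℝ → ℝ)
    (h3 : Integrable fun ξ => ξ * Mi ξ) (h4 : Integrable fun ξ => ξ * Mi1 ξ) :
    (∫ ξ : ℝ, ξ *
        (Mi ξ * (if 0 ≤ ξ then (1 : ℝ) else 0)
          + Mi (-ξ) * (if ξ ^ 2 ≤ 2 * g * ΔZ then (1 : ℝ) else 0)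
              * (if ξ ≤ 0 then (1 : ℝ) else 0)
          + Mi1 (-Real.sqrt (ξ ^ 2 - 2 * g * ΔZ))
              * (if 2 * g * ΔZ ≤ ξ ^ 2 then (1 : ℝ) else 0)
              * (if ξ ≤ 0 then (1 : ℝ) else 0)))
    = ∫ ξ : ℝ, ξ *
        (Mi1 ξ * (if ξ ≤ 0 then (1 : ℝ) else 0)
          + Mi1 (-ξ) * (if ξ ^ 2 ≤ -(2 * g * ΔZ) then (1 : ℝ) else 0)
              * (if 0 ≤ ξ then (1 : ℝ) else 0)
          + Mi (Real.sqrt (ξ ^ 2 + 2 * g * ΔZ))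
              * (if -(2 * g * ΔZ) ≤ ξ ^ 2 then (1 : ℝ) else 0)
              * (if 0 ≤ ξ then (1 : ℝ) else 0)) := by
  set c := 2 * g * ΔZ
  have hN : Integrable fun v => v * Mi1 (-v) := h4.mul_comp_neg
  change ∫ ξ, ξ * downwindDensity c Mi Mi1 ξ = ∫ ξ, ξ * upwindDensity c Mi Mi1 ξ
  simp only [downwindDensity_eq, upwindDensity_eq, mul_add]
  rw [integral_add (integrable_mul_reflectionDensity c h3)
      (integrable_mul_transmissionDensity (-c) hN).mul_comp_neg,
    integral_add (integrable_mul_transmissionDensity c h3)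
      (integrable_mul_reflectionDensity (-c) hN).mul_comp_neg,
    integral_mul_comp_neg, integral_mul_comp_neg,
    integral_mul_reflectionDensity c h3, integral_mul_transmissionDensity,
    integral_mul_transmissionDensity, integral_mul_reflectionDensity (-c) hN]

/-- Conservativity of the mass flux across an interface for the
reflection–transmission kinetic fluxes: `∫ ξ M⁻(ξ) dξ = ∫ ξ M⁺(ξ) dξ`. -/
theorem interface_mass_flux_conservative (g ΔZ : ℝ) (hg : 0 < g)
    (Mi Mi1 : ℝ → ℝ) (hMi : ∀ ξ, 0 ≤ Mi ξ) (hMi1 : ∀ ξ, 0 ≤ Mi1 ξ)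
    (h1 : Integrable Mi) (h2 : Integrable Mi1)
    (h3 : Integrable fun ξ => ξ * Mi ξ) (h4 : Integrable fun ξ => ξ * Mi1 ξ) :
    (∫ ξ : ℝ, ξ *
        (Mi ξ * (if 0 ≤ ξ then (1 : ℝ) else 0)
          + Mi (-ξ) * (if ξ ^ 2 ≤ 2 * g * ΔZ then (1 : ℝ) else 0)
              * (if ξ ≤ 0 then (1 : ℝ) else 0)
          + Mi1 (-Real.sqrt (ξ ^ 2 - 2 * g * ΔZ))
              * (if 2 * g * ΔZ ≤ ξ ^ 2 then (1 : ℝ) else 0)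
              * (if ξ ≤ 0 then (1 : ℝ) else 0)))
    = ∫ ξ : ℝ, ξ *
        (Mi1 ξ * (if ξ ≤ 0 then (1 : ℝ) else 0)
          + Mi1 (-ξ) * (if ξ ^ 2 ≤ -(2 * g * ΔZ) then (1 : ℝ) else 0)
              * (if 0 ≤ ξ then (1 : ℝ) else 0)
          + Mi (Real.sqrt (ξ ^ 2 + 2 * g * ΔZ))
              * (if -(2 * g * ΔZ) ≤ ξ ^ 2 then (1 : ℝ) else 0)
              * (if 0 ≤ ξ then (1 : ℝ) else 0)) :=
  interface_mass_flux_conservative_general g ΔZ Mi Mi1 h3 h4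
end
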